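/- (Partition-based pruning preserves completeness) Let Π = ⟨P, A, I, G⟩ be a STRIPS planning problem and A = A_1 ⊎ ... ⊎ A_n an arbitrary partition of its actions into disjoint sets, with private and public propositions and actions defined with respect to this partition as in MA-STRIPS. Assume every proposition in G is public. If Π has a solution, then Π has a solution that survives partition-based pruning, i.e., a solution in which every action that immediately follows a private action belonging to some A_i itself belongs to A_i. -/

import Mathlib

/-- A STRIPS action over a set of propositions `P`. -/
structure StripsAction (P : Type*) where
  pre : Set P
  add : Set P
  del : Set P

namespace StripsAction

variable {P : Type*}

/-- The variable set of an action: all propositions it mentions. -/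
def varset (a : StripsAction P) : Set P := a.pre ∪ a.add ∪ a.del

/-- An action is applicable in state `s` iff its preconditions hold in `s`. -/
def Applicable (a : StripsAction P) (s : Set P) : Prop := a.pre ⊆ s

/-- Applying an action to a state: `a(s) = (s \ del(a)) ∪ add(a)`. -/
def apply (a : StripsAction P) (s : Set P) : Set P := (s \ a.del) ∪ a.add

end StripsAction

/-- The state obtained by applying a sequence of actions in order. -/
def applySeq {P : Type*} : List (StripsAction P) → Set P → Set P
  | [], s => s
  | a :: rest, s => applySeq rest (a.apply s)

/-- A sequence of actions is a legal plan from `s` iff each action is applicable in the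
state obtained by applying the previous ones in order. -/
def LegalPlan {P : Type*} : List (StripsAction P) → Set P → Prop
  | [], _ => True
  | a :: rest, s => a.Applicable s ∧ LegalPlan rest (a.apply s)

/-- An MA-STRIPS problem: pairwise-disjoint finite action sets `A i` (one per agent),
an initial state and a goal. -/
structure MAProblem (P Ag : Type*) where
  A : Ag → Set (StripsAction P)
  disjoint : ∀ i j : Ag, i ≠ j → Disjoint (A i) (A j)
  finite : ∀ i : Ag, (A i).Finite
  I : Set P
  G : Set P

namespace MAProblem

variable {P Ag : Type*}

/-- Proposition `p` is private to agent `i` iff every action mentioning `p` belongs to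
`A i`. -/
def PrivateProp (pb : MAProblem P Ag) (p : P) (i : Ag) : Prop :=
  ∀ j : Ag, ∀ a ∈ pb.A j, p ∈ a.varset → j = i

/-- An action `a ∈ A i` is private iff every proposition it mentions is private to `i`. -/
def PrivateAction (pb : MAProblem P Ag) (a : StripsAction P) (i : Ag) : Prop :=
  a ∈ pb.A i ∧ ∀ p ∈ a.varset, pb.PrivateProp p i

/-- An action of the problem is public iff it is not private. -/
def PublicAction (pb : MAProblem P Ag) (a : StripsAction P) : Prop :=
  (∃ i, a ∈ pb.A i) ∧ ∀ i : Ag, ¬ pb.PrivateAction a i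

end MAProblem

/-- The cost of a plan is the sum of the costs of its actions. -/
def planCost {P : Type*} (cost : StripsAction P → ℝ) (L : List (StripsAction P)) : ℝ :=
  (L.map cost).sum

/-- A solution of an MA-STRIPS problem: a legal plan from `I`, built from the agents'
actions, whose final state contains the goal. -/
def Solution {P Ag : Type*} (pb : MAProblem P Ag) (L : List (StripsAction P)) : Prop :=
  (∀ x ∈ L, ∃ k, x ∈ pb.A k) ∧ LegalPlan L pb.I ∧ pb.G ⊆ applySeq L pb.I

/-- A solution is optimal iff no solution has strictly smaller cost. -/
def OptimalSolution {P Ag : Type*} (pb : MAProblem P Ag) (cost : StripsAction P → ℝ)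
    (L : List (StripsAction P)) : Prop :=
  Solution pb L ∧ ∀ L' : List (StripsAction P), Solution pb L' →
    planCost cost L ≤ planCost cost L'

/-- A plan survives partition-based pruning iff every action that immediately follows a
private action belonging to some `A i` itself belongs to `A i`. -/
def SurvivesPruning {P Ag : Type*} (pb : MAProblem P Ag) (L : List (StripsAction P)) : Prop :=
  ∀ (k : ℕ) (hk : k + 1 < L.length) (i : Ag),
    pb.PrivateAction (L.get ⟨k, Nat.lt_of_succ_lt hk⟩) i → L.get ⟨k + 1, hk⟩ ∈ pb.A i


/-!
Pushing a private action of `A i` to the right past an action of another part changes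
neither legality nor the resulting state, because the two actions mention disjoint
propositions. Processing a plan from its end, each private action is pushed right until
it meets an action of its own part; if there is none it is dropped, which only affects
private propositions and hence not the (public) goal.
-/

namespace StripsAction

variable {P : Type*} {a b : StripsAction P} {s : Set P}

lemma mem_apply_iff_of_notMem_varset {p : P} (hp : p ∉ a.varset) : p ∈ a.apply s ↔ p ∈ s := by
  simp only [varset, Set.mem_union, not_or] at hp
  simp [apply, hp.1.2, hp.2]

lemma mem_apply_congr {t : Set P} {p : P} (h : p ∈ s ↔ p ∈ t) :
    p ∈ a.apply s ↔ p ∈ a.apply t := by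
  simp [apply, h]

lemma apply_inter_of_disjoint {S : Set P} (h : Disjoint a.varset S) (s : Set P) :
    a.apply s ∩ S = s ∩ S := by
  ext p
  simp only [Set.mem_inter_iff, and_congr_left_iff]
  exact fun hp => mem_apply_iff_of_notMem_varset (Set.disjoint_right.mp h hp)

lemma apply_comm (h : Disjoint a.varset b.varset) (s : Set P) :
    b.apply (a.apply s) = a.apply (b.apply s) := by
  ext p
  by_cases hpa : p ∈ a.varset
  · have hpb : p ∉ b.varset := Set.disjoint_left.mp h hpa
    rw [mem_apply_iff_of_notMem_varset hpb]
    exact mem_apply_congr (mem_apply_iff_of_notMem_varset hpb).symm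
  · rw [mem_apply_iff_of_notMem_varset hpa]
    exact mem_apply_congr (mem_apply_iff_of_notMem_varset hpa)

lemma applicable_apply_iff (h : Disjoint a.varset b.varset) :
    a.Applicable (b.apply s) ↔ a.Applicable s := by
  refine forall₂_congr fun p hp => mem_apply_iff_of_notMem_varset ?_
  exact Set.disjoint_left.mp h (Or.inl (Or.inl hp))

end StripsAction

section Pruning

open StripsAction

variable {P Ag : Type*}

lemma applySeq_swap {a b : StripsAction P} (h : Disjoint a.varset b.varset)
    (L : List (StripsAction P)) (s : Set P) :
    applySeq (b :: a :: L) s = applySeq (a :: b :: L) s := by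
  simp only [applySeq, apply_comm h]

lemma LegalPlan.swap {a b : StripsAction P} (h : Disjoint a.varset b.varset)
    {L : List (StripsAction P)} {s : Set P} (hL : LegalPlan (a :: b :: L) s) :
    LegalPlan (b :: a :: L) s := by
  obtain ⟨ha, hb, hL⟩ := hL
  exact ⟨(applicable_apply_iff h.symm).mp hb, (applicable_apply_iff h).mpr ha,
    apply_comm h s ▸ hL⟩

namespace MAProblem

variable (pb : MAProblem P Ag)

def publicProps : Set P := {p | ∀ i, ¬ pb.PrivateProp p i}

def MayPrecede (x y : StripsAction P) : Prop := ∀ i, pb.PrivateAction x i → y ∈ pb.A i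

variable {pb}

lemma eq_of_mem_A {a : StripsAction P} {i j : Ag} (hi : a ∈ pb.A i) (hj : a ∈ pb.A j) :
    i = j := by
  by_contra hne
  exact Set.disjoint_left.mp (pb.disjoint i j hne) hi hj

lemma MayPrecede.of_mem_A {x y z : StripsAction P} {i : Ag} (h : pb.MayPrecede x y)
    (hy : y ∈ pb.A i) (hz : z ∈ pb.A i) : pb.MayPrecede x z :=
  fun j hj => eq_of_mem_A hy (h j hj) ▸ hz

namespace PrivateAction

variable {a : StripsAction P} {i : Ag}

lemma mayPrecede {b : StripsAction P} (ha : pb.PrivateAction a i) (hb : b ∈ pb.A i) :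
    pb.MayPrecede a b :=
  fun _ hj => eq_of_mem_A ha.1 hj.1 ▸ hb

lemma disjoint_varset {b : StripsAction P} {j : Ag} (ha : pb.PrivateAction a i)
    (hb : b ∈ pb.A j) (hji : j ≠ i) : Disjoint a.varset b.varset :=
  Set.disjoint_left.mpr fun p hpa hpb => hji (ha.2 p hpa j b hb hpb)

lemma disjoint_publicProps (ha : pb.PrivateAction a i) :
    Disjoint a.varset pb.publicProps :=
  Set.disjoint_left.mpr fun p hp hpub => hpub i (ha.2 p hp)

end PrivateAction

lemma survivesPruning_iff_isChain (L : List (StripsAction P)) :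
    SurvivesPruning pb L ↔ L.IsChain pb.MayPrecede := by
  rw [List.isChain_iff_getElem]
  exact ⟨fun h k hk => h k hk, fun h k hk => h k hk⟩

/-- The last conjunct holds because `a` is either dropped or lands in front of an action of
its own part. -/
lemma exists_push_private {a : StripsAction P} {i : Ag} (ha : pb.PrivateAction a i) :
    ∀ {L : List (StripsAction P)} {s : Set P}, (∀ x ∈ L, ∃ k, x ∈ pb.A k) →
      LegalPlan (a :: L) s → L.IsChain pb.MayPrecede →
      ∃ L' : List (StripsAction P), L' ⊆ a :: L ∧ LegalPlan L' s ∧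
        applySeq L' s ∩ pb.publicProps = applySeq (a :: L) s ∩ pb.publicProps ∧
        L'.IsChain pb.MayPrecede ∧
        ∀ b ∉ pb.A i, (b :: L).IsChain pb.MayPrecede → (b :: L').IsChain pb.MayPrecede
  | [], s, _, _, _ =>
    ⟨[], List.nil_subset _, trivial, (apply_inter_of_disjoint ha.disjoint_publicProps s).symm,
      List.isChain_nil, fun b _ _ => List.isChain_singleton b⟩
  | b :: t, s, hmem, hlegal, hchain => by
    by_cases hb : b ∈ pb.A i
    · refine ⟨a :: b :: t, List.Subset.refl _, hlegal, rfl,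
        List.isChain_cons_cons.mpr ⟨ha.mayPrecede hb, hchain⟩, fun c _ hc => ?_⟩
      obtain ⟨hcb, hchain⟩ := List.isChain_cons_cons.mp hc
      exact List.isChain_cons_cons.mpr ⟨hcb.of_mem_A hb ha.1, List.isChain_cons_cons.mpr
        ⟨ha.mayPrecede hb, hchain⟩⟩
    · obtain ⟨j, hbj⟩ := hmem b List.mem_cons_self
      have hdisj := ha.disjoint_varset hbj (fun h => hb (h ▸ hbj))
      obtain ⟨hb_app, ht_legal⟩ := hlegal.swap hdisj
      obtain ⟨t', ht'_sub, ht'_legal, ht'_public, -, ht'_pred⟩ :=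
        exists_push_private ha (fun x hx => hmem x (List.mem_cons_of_mem b hx)) ht_legal
          hchain.tail
      have hchain' := ht'_pred b hb hchain
      refine ⟨b :: t', ?_, ⟨hb_app, ht'_legal⟩, ?_, hchain', fun c _ hc => ?_⟩
      · refine List.cons_subset.mpr ⟨by simp, List.Subset.trans ht'_sub ?_⟩
        exact List.cons_subset_cons a (List.subset_cons_self b t)
      · rw [← applySeq_swap hdisj]
        exact ht'_public
      · exact List.isChain_cons_cons.mpr ⟨(List.isChain_cons_cons.mp hc).1, hchain'⟩

lemma exists_surviving_subplan :
    ∀ {L : List (StripsAction P)} {s : Set P}, (∀ x ∈ L, ∃ k, x ∈ pb.A k) → LegalPlan L s →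
      ∃ L' : List (StripsAction P), L' ⊆ L ∧ LegalPlan L' s ∧
        applySeq L' s ∩ pb.publicProps = applySeq L s ∩ pb.publicProps ∧
        L'.IsChain pb.MayPrecede
  | [], _, _, _ => ⟨[], List.Subset.refl _, trivial, rfl, List.isChain_nil⟩
  | a :: rest, s, hmem, ⟨ha_app, hrest_legal⟩ => by
    obtain ⟨rest', hsub, hlegal, hpublic, hchain⟩ :=
      exists_surviving_subplan (fun x hx => hmem x (List.mem_cons_of_mem a hx)) hrest_legal
    by_cases hpriv : ∃ i, pb.PrivateAction a i
    · obtain ⟨i, ha⟩ := hpriv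
      have hmem' : ∀ x ∈ rest', ∃ k, x ∈ pb.A k := fun x hx => hmem x (.tail a (hsub hx))
      obtain ⟨L', hsub', hlegal', hpublic', hchain', -⟩ :=
        exists_push_private ha hmem' ⟨ha_app, hlegal⟩ hchain
      exact ⟨L', List.Subset.trans hsub' (List.cons_subset_cons a hsub), hlegal',
        hpublic'.trans hpublic, hchain'⟩
    · refine ⟨a :: rest', List.cons_subset_cons a hsub, ⟨ha_app, hlegal⟩, hpublic,
        List.isChain_cons.mpr ⟨fun _ _ i hi => absurd ⟨i, hi⟩ hpriv, hchain⟩⟩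

end MAProblem

end Pruning

theorem pb_pruning_preserves_completeness_general {P Ag : Type*}
    (pb : MAProblem P Ag)
    (hG : ∀ p ∈ pb.G, ∀ i : Ag, ¬ pb.PrivateProp p i)
    (L : List (StripsAction P)) (hsol : Solution pb L) :
    ∃ L' : List (StripsAction P), Solution pb L' ∧ SurvivesPruning pb L' := by
  obtain ⟨hmem, hlegal, hgoal⟩ := hsol
  obtain ⟨L', hsub, hlegal', hpublic, hchain⟩ := pb.exists_surviving_subplan hmem hlegal
  have hgoal' : pb.G ⊆ applySeq L' pb.I ∩ pb.publicProps := by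
    rw [hpublic]
    exact Set.subset_inter hgoal hG
  exact ⟨L', ⟨fun x hx => hmem x (hsub hx), hlegal', hgoal'.trans Set.inter_subset_left⟩,
    (MAProblem.survivesPruning_iff_isChain L').mpr hchain⟩

/-- partition-based pruning preserves completeness: for a STRIPS problem
whose (finite) action set is partitioned into disjoint sets `A i` (modelled by
`MAProblem` with a finite index type), with a goal made of public propositions only:
if the problem has a solution, then it has a solution that survives partition-based
pruning. -/
theorem pb_pruning_preserves_completeness {P Ag : Type*} [Finite P] [Finite Ag]
    (pb : MAProblem P Ag)
    (hG : ∀ p ∈ pb.G, ∀ i : Ag, ¬ pb.PrivateProp p i)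
    (L : List (StripsAction P)) (hsol : Solution pb L) :
    ∃ L' : List (StripsAction P), Solution pb L' ∧ SurvivesPruning pb L' :=
  pb_pruning_preserves_completeness_general pb hG L hsol
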